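/- Let n ≥ 2. Let h_n : (Fin n → Fin 3) → ℝ and h_{n−1} : (Fin (n−1) → Fin 3) → ℝ each satisfy: h = 0 on the corner set {A, B, C} of its Hanoi graph and h(s) = 1 + (1/deg s)·Σ_{t adjacent to s} h(t) for every non-corner state s. Then (1/3^n)·Σ_{s} h_n(s) = (1/3^(n−1))·Σ_{s} h_{n−1}(s) + (2/3)·h_n(s½). (Lemma 1 of the paper: E_{r→a}(n) = E_{r→a}(n−1) + (2/3)·E_{½→a}(n).) -/

import Mathlib

/-- The Hanoi graph `H_n`: vertices are states `s : Fin n → Fin 3` (`s k` is the peg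
holding the disk of size `k+1`); two distinct states are adjacent iff a single disk moves
and it is topmost on both its source and destination pegs. -/
def hanoi (n : ℕ) : SimpleGraph (Fin n → Fin 3) where
  Adj s t := ∃ k : Fin n, (∀ j, j ≠ k → s j = t j) ∧ s k ≠ t k ∧
    ∀ j, j < k → s j ≠ s k ∧ s j ≠ t k
  symm := by
    constructor
    rintro s t ⟨k, h1, h2, h3⟩
    refine ⟨k, fun j hj => (h1 j hj).symm, h2.symm, fun j hj => ?_⟩
    rw [← h1 j hj.ne]
    exact ⟨(h3 j hj).2, (h3 j hj).1⟩
  loopless := by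
    constructor
    rintro s ⟨k, _, h2, _⟩
    exact h2 rfl

instance hanoiAdjDecidable (n : ℕ) : DecidableRel (hanoi n).Adj := fun s t =>
  inferInstanceAs (Decidable (∃ k : Fin n, (∀ j, j ≠ k → s j = t j) ∧ s k ≠ t k ∧
    ∀ j, j < k → s j ≠ s k ∧ s j ≠ t k))

/-- The corner state with all disks on peg `p`. -/
def corner (n : ℕ) (p : Fin 3) : Fin n → Fin 3 := fun _ => p

/-- The state `s½`: the largest disk on the second peg, all other disks on the first peg. -/
def halfState (n : ℕ) : Fin n → Fin 3 := fun k => if (k : ℕ) < n - 1 then 0 else 1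

open Finset

lemma hanoi_adj {n : ℕ} (s t : Fin n → Fin 3) :
    (hanoi n).Adj s t ↔ ∃ k : Fin n, (∀ j, j ≠ k → s j = t j) ∧ s k ≠ t k ∧
      ∀ j, j < k → s j ≠ s k ∧ s j ≠ t k := Iff.rfl

lemma adj_snoc_iff {m : ℕ} (s' t' : Fin m → Fin 3) (p q : Fin 3) :
    (hanoi (m+1)).Adj (Fin.snoc s' p) (Fin.snoc t' q) ↔
      (p = q ∧ (hanoi m).Adj s' t') ∨
      (s' = t' ∧ p ≠ q ∧ ∀ j, s' j ≠ p ∧ s' j ≠ q) := by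
  rw [hanoi_adj]
  constructor
  · rintro ⟨k, h1, h2, h3⟩
    induction k using Fin.lastCases with
    | last =>
      refine Or.inr ⟨funext fun j => ?_, ?_, fun j => ?_⟩
      · have := h1 (Fin.castSucc j) (Fin.castSucc_lt_last j).ne
        simpa using this
      · simpa using h2
      · have := h3 (Fin.castSucc j) (Fin.castSucc_lt_last j)
        simpa using this
    | cast k' =>
      have hpq : p = q := by
        have := h1 (Fin.last m) (Fin.castSucc_lt_last k').ne'
        simpa using this
      refine Or.inl ⟨hpq, k', fun j hj => ?_, ?_, fun j hj => ?_⟩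
      · have := h1 (Fin.castSucc j) (by simpa [Fin.castSucc_inj] using hj)
        simpa using this
      · have := h2
        simpa using this
      · have := h3 (Fin.castSucc j) (by simpa using hj)
        simpa using this
  · rintro (⟨rfl, k', h1, h2, h3⟩ | ⟨rfl, hpq, hcond⟩)
    · refine ⟨Fin.castSucc k', fun j hj => ?_, by simpa using h2, fun j hj => ?_⟩
      · induction j using Fin.lastCases with
        | last => simp
        | cast j' => simpa using h1 j' (by simpa [Fin.castSucc_inj] using hj)
      · induction j using Fin.lastCases with
        | last => exact absurd hj (by simp [Fin.lt_iff_val_lt_val])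
        | cast j' =>
          have := h3 j' (by simpa using hj)
          simpa using this
    · refine ⟨Fin.last m, fun j hj => ?_, by simpa using hpq, fun j hj => ?_⟩
      · induction j using Fin.lastCases with
        | last => exact absurd rfl hj
        | cast j' => simp
      · induction j using Fin.lastCases with
        | last => exact absurd hj (lt_irrefl _)
        | cast j' => simpa using hcond j'

lemma snoc_const {m : ℕ} (c : Fin 3) :
    (Fin.snoc (corner m c) c : Fin (m+1) → Fin 3) = corner (m+1) c := by
  funext k
  induction k using Fin.lastCases with
  | last => simp [corner]
  | cast j => simp [corner]

def homSnoc {m : ℕ} (r : Fin 3) : hanoi m →g hanoi (m+1) where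
  toFun s := Fin.snoc s r
  map_rel' h := (adj_snoc_iff _ _ _ _).mpr (Or.inl ⟨rfl, h⟩)

lemma third_peg (p q : Fin 3) (h : p ≠ q) : ∃ r, r ≠ p ∧ r ≠ q := by
  revert h; revert p q; decide

lemma hanoi_reach : ∀ (m : ℕ) (s : Fin m → Fin 3) (p : Fin 3),
    (hanoi m).Reachable s (corner m p) := by
  intro m
  induction m with
  | zero =>
    intro s p
    have : s = corner 0 p := funext fun i => i.elim0
    rw [this]
  | succ m ih =>
    intro s p
    rw [← Fin.snoc_init_self s]
    by_cases hq : s (Fin.last m) = p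
    · rw [hq, ← snoc_const p]
      exact (ih (Fin.init s) p).map (homSnoc p)
    · obtain ⟨r, hrp, hrq⟩ := third_peg p (s (Fin.last m)) (Ne.symm hq)
      have R1 : (hanoi (m+1)).Reachable (Fin.snoc (Fin.init s) (s (Fin.last m)))
          (Fin.snoc (corner m r) (s (Fin.last m))) :=
        (ih (Fin.init s) r).map (homSnoc (s (Fin.last m)))
      have R2 : (hanoi (m+1)).Adj (Fin.snoc (corner m r) (s (Fin.last m)))
          (Fin.snoc (corner m r) p) :=
        (adj_snoc_iff _ _ _ _).mpr (Or.inr ⟨rfl, hq, fun j => ⟨hrq, hrp⟩⟩)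
      have R3 : (hanoi (m+1)).Reachable (Fin.snoc (corner m r) p) (corner (m+1) p) := by
        rw [← snoc_const p]
        exact (ih (corner m r) p).map (homSnoc p)
      exact (R1.trans R2.reachable).trans R3

open Finset in
lemma degree_pos {m : ℕ} (s : Fin m → Fin 3) (hs : ∀ p, s ≠ corner m p) :
    0 < (hanoi m).degree s := by
  have hm : 0 < m := by
    rcases Nat.eq_zero_or_pos m with h | h
    · subst h; exact absurd (funext fun i => i.elim0) (hs 0)
    · exact h
  set i0 : Fin m := ⟨0, hm⟩
  have hc : s i0 + 1 ≠ s i0 := by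
    generalize s i0 = a; revert a; decide
  have : (hanoi m).Adj s (Function.update s i0 (s i0 + 1)) := by
    refine ⟨i0, fun j hj => (Function.update_of_ne hj _ _).symm, ?_, fun j hj => ?_⟩
    · rw [Function.update_self]; exact fun h => hc h.symm
    · exact absurd (Fin.lt_iff_val_lt_val.mp hj) (Nat.not_lt_zero _)
  rw [← SimpleGraph.card_neighborFinset_eq_degree]
  exact card_pos.mpr ⟨_, (hanoi m).mem_neighborFinset s _ |>.mpr this⟩

open Finset in
lemma nonpos_of_harmonic {m : ℕ} (w : (Fin m → Fin 3) → ℝ)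
    (h0 : ∀ p, w (corner m p) = 0)
    (hrec : ∀ s, (∀ p, s ≠ corner m p) →
      w s = (1 / ((hanoi m).degree s : ℝ)) * ∑ t ∈ (hanoi m).neighborFinset s, w t) :
    ∀ s, w s ≤ 0 := by
  obtain ⟨s0, -, hs0⟩ := Finset.exists_max_image (univ : Finset (Fin m → Fin 3)) w ⟨_, mem_univ (corner m 0)⟩
  have hmax : ∀ s, w s ≤ w s0 := fun s => hs0 s (mem_univ s)
  suffices h : w s0 ≤ 0 by
    intro s; exact le_trans (hmax s) h
  obtain ⟨W⟩ := hanoi_reach m s0 0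
  have key : ∀ (s c : Fin m → Fin 3) (W : (hanoi m).Walk s c),
      (∃ p, c = corner m p) → w s = w s0 → w s0 ≤ 0 := by
    intro s c W
    induction W with
    | nil => rintro ⟨p, rfl⟩ h; rw [← h, h0]
    | @cons a b c hab W ih =>
      intro hcor ha
      by_cases hc : ∀ p, a ≠ corner m p
      · -- all neighbors of a attain the max
        have hd : (0:ℝ) < ((hanoi m).degree a : ℝ) := by
          exact_mod_cast degree_pos a hc
        have hsum : ∑ t ∈ (hanoi m).neighborFinset a, w t
            = ((hanoi m).degree a : ℝ) * w a := by
          have := hrec a hc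
          field_simp at this
          linarith [this]
        have hzero : ∑ t ∈ (hanoi m).neighborFinset a, (w a - w t) = 0 := by
          rw [sum_sub_distrib, hsum, sum_const, SimpleGraph.card_neighborFinset_eq_degree]
          ring
        have hball : ∀ t ∈ (hanoi m).neighborFinset a, w a - w t = 0 := by
          refine (sum_eq_zero_iff_of_nonneg fun t _ => ?_).mp hzero
          have := hmax t
          rw [ha] at *
          linarith
        have hb : w b = w s0 := by
          have := hball b ((hanoi m).mem_neighborFinset a b |>.mpr hab)
          linarith [ha ▸ this]
        exact ih hcor hb
      · push_neg at hc
        obtain ⟨p, hp⟩ := hc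
        rw [← ha, hp, h0]
  exact key s0 _ W ⟨0, rfl⟩ rfl

open Finset in
lemma hanoi_unique {m : ℕ} (u u' : (Fin m → Fin 3) → ℝ)
    (hu0 : ∀ p, u (corner m p) = 0)
    (hu : ∀ s, (∀ p, s ≠ corner m p) →
      u s = 1 + (1 / ((hanoi m).degree s : ℝ)) * ∑ t ∈ (hanoi m).neighborFinset s, u t)
    (hu0' : ∀ p, u' (corner m p) = 0)
    (hu' : ∀ s, (∀ p, s ≠ corner m p) →
      u' s = 1 + (1 / ((hanoi m).degree s : ℝ)) * ∑ t ∈ (hanoi m).neighborFinset s, u' t) :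
    u = u' := by
  have main : ∀ (v v' : (Fin m → Fin 3) → ℝ),
      (∀ p, v (corner m p) = 0) →
      (∀ s, (∀ p, s ≠ corner m p) →
        v s = 1 + (1 / ((hanoi m).degree s : ℝ)) * ∑ t ∈ (hanoi m).neighborFinset s, v t) →
      (∀ p, v' (corner m p) = 0) →
      (∀ s, (∀ p, s ≠ corner m p) →
        v' s = 1 + (1 / ((hanoi m).degree s : ℝ)) * ∑ t ∈ (hanoi m).neighborFinset s, v' t) →
      ∀ s, v s - v' s ≤ 0 := by
    intro v v' h1 h2 h3 h4
    refine nonpos_of_harmonic (fun s => v s - v' s) (fun p => ?_) ?_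
    · show v _ - v' _ = 0
      rw [h1, h3]; ring
    · intro s hs
      show v s - v' s = _ * ∑ t ∈ _, (v t - v' t)
      rw [h2 s hs, h4 s hs, sum_sub_distrib]
      ring
  funext s
  have h1 := main u u' hu0 hu hu0' hu' s
  have h2 := main u' u hu0' hu' hu0 hu s
  linarith

lemma comp_perm_adj {m : ℕ} (σ : Equiv.Perm (Fin 3)) (s t : Fin m → Fin 3)
    (h : (hanoi m).Adj s t) : (hanoi m).Adj (σ ∘ s) (σ ∘ t) := by
  obtain ⟨k, h1, h2, h3⟩ := h
  exact ⟨k, fun j hj => congrArg σ (h1 j hj), fun he => h2 (σ.injective he),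
    fun j hj => ⟨fun he => (h3 j hj).1 (σ.injective he), fun he => (h3 j hj).2 (σ.injective he)⟩⟩

lemma comp_perm_adj_iff {m : ℕ} (σ : Equiv.Perm (Fin 3)) (s t : Fin m → Fin 3) :
    (hanoi m).Adj (σ ∘ s) (σ ∘ t) ↔ (hanoi m).Adj s t := by
  constructor
  · intro h
    have := comp_perm_adj σ⁻¹ _ _ h
    simpa [Function.comp_assoc, Function.comp_def] using this
  · exact comp_perm_adj σ s t

open Finset in
lemma neighborFinset_comp_perm {m : ℕ} (σ : Equiv.Perm (Fin 3)) (s : Fin m → Fin 3) :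
    (hanoi m).neighborFinset (σ ∘ s) = ((hanoi m).neighborFinset s).image (fun t => σ ∘ t) := by
  ext t
  simp only [SimpleGraph.mem_neighborFinset, mem_image]
  constructor
  · intro h
    refine ⟨⇑σ⁻¹ ∘ t, ?_, ?_⟩
    · have := comp_perm_adj σ⁻¹ _ _ h
      convert this using 2
      funext i; simp
    · funext i; simp
  · rintro ⟨t', ht', rfl⟩
    exact comp_perm_adj σ _ _ ht'

lemma comp_perm_inj {m : ℕ} (σ : Equiv.Perm (Fin 3)) :
    Function.Injective (fun t : Fin m → Fin 3 => σ ∘ t) :=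
  fun a b h => funext fun i => σ.injective (congrFun h i)

open Finset in
lemma degree_comp_perm {m : ℕ} (σ : Equiv.Perm (Fin 3)) (s : Fin m → Fin 3) :
    (hanoi m).degree (σ ∘ s) = (hanoi m).degree s := by
  rw [← SimpleGraph.card_neighborFinset_eq_degree, ← SimpleGraph.card_neighborFinset_eq_degree,
    neighborFinset_comp_perm, card_image_of_injective _ (comp_perm_inj σ)]

open Finset in
lemma comp_perm_invariant {m : ℕ} (u : (Fin m → Fin 3) → ℝ)
    (h0 : ∀ p, u (corner m p) = 0)
    (hrec : ∀ s, (∀ p, s ≠ corner m p) →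
      u s = 1 + (1 / ((hanoi m).degree s : ℝ)) * ∑ t ∈ (hanoi m).neighborFinset s, u t)
    (σ : Equiv.Perm (Fin 3)) (s : Fin m → Fin 3) : u (σ ∘ s) = u s := by
  have key : (fun s => u (σ ∘ s)) = u := by
    apply hanoi_unique
    · intro p
      show u (σ ∘ corner m p) = 0
      have : σ ∘ corner m p = corner m (σ p) := rfl
      rw [this, h0]
    · intro s hs
      show u (σ ∘ s) = 1 + _ * ∑ t ∈ _, u (σ ∘ t)
      have hsc : ∀ p, σ ∘ s ≠ corner m p := by
        intro p hp
        apply hs (σ⁻¹ p)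
        funext i
        have := congrFun hp i
        simp only [Function.comp_apply, corner] at this ⊢
        rw [← this]; simp
      rw [hrec _ hsc, degree_comp_perm, neighborFinset_comp_perm,
        sum_image (fun a _ b _ h => comp_perm_inj σ h)]
    · exact h0
    · exact hrec
  exact congrFun key s

lemma snoc_inj {m : ℕ} (p : Fin 3) :
    Function.Injective (fun s' : Fin m → Fin 3 => (Fin.snoc s' p : Fin (m+1) → Fin 3)) := by
  intro a b h
  funext i
  have := congrFun h (Fin.castSucc i)
  simpa using this

lemma snoc_noncorner {m : ℕ} (s' : Fin m → Fin 3) (p : Fin 3)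
    (hs : ∀ q, s' ≠ corner m q) : ∀ q, (Fin.snoc s' p : Fin (m+1) → Fin 3) ≠ corner (m+1) q := by
  intro q hq
  apply hs q
  funext i
  have := congrFun hq (Fin.castSucc i)
  simpa [corner] using this

open Finset in
lemma neighborFinset_snoc {m : ℕ} (s' : Fin m → Fin 3) (p : Fin 3)
    (hs : ∀ q, s' ≠ corner m q) :
    (hanoi (m+1)).neighborFinset (Fin.snoc s' p)
      = ((hanoi m).neighborFinset s').image (fun t' => Fin.snoc t' p) := by
  have hm : 0 < m := by
    rcases Nat.eq_zero_or_pos m with h | h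
    · subst h; exact absurd (funext fun i => i.elim0) (hs 0)
    · exact h
  ext t
  simp only [SimpleGraph.mem_neighborFinset, mem_image]
  constructor
  · intro h
    rw [← Fin.snoc_init_self t] at h
    rcases (adj_snoc_iff _ _ _ _).mp h with ⟨hpq, hadj⟩ | ⟨heq, hpq, hcond⟩
    · exact ⟨Fin.init t, hadj, by rw [hpq, Fin.snoc_init_self]⟩
    · exfalso
      -- s' avoids two distinct pegs, hence is constant
      obtain ⟨r, hr1, hr2⟩ := third_peg p (t (Fin.last m)) hpq
      have fin3 : ∀ p q a b : Fin 3, p ≠ q → a ≠ p → a ≠ q → b ≠ p → b ≠ q → a = b := by decide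
      exact hs r (funext fun j => fin3 p (t (Fin.last m)) (s' j) r hpq
        (hcond j).1 (hcond j).2 hr1 hr2)
  · rintro ⟨t', ht', rfl⟩
    exact (adj_snoc_iff _ _ _ _).mpr (Or.inl ⟨rfl, ht'⟩)

open Finset in
lemma degree_snoc {m : ℕ} (s' : Fin m → Fin 3) (p : Fin 3)
    (hs : ∀ q, s' ≠ corner m q) :
    (hanoi (m+1)).degree (Fin.snoc s' p) = (hanoi m).degree s' := by
  rw [← SimpleGraph.card_neighborFinset_eq_degree, ← SimpleGraph.card_neighborFinset_eq_degree,
    neighborFinset_snoc s' p hs, card_image_of_injective _ (snoc_inj p)]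


lemma halfState_snoc {m : ℕ} : halfState (m+1) = Fin.snoc (corner m 0) 1 := by
  funext k
  induction k using Fin.lastCases with
  | last => simp [halfState]
  | cast j => simp [halfState, corner, j.isLt]

def snocEquiv (m : ℕ) : (Fin m → Fin 3) × Fin 3 ≃ (Fin (m+1) → Fin 3) where
  toFun x := Fin.snoc x.1 x.2
  invFun t := (Fin.init t, t (Fin.last m))
  left_inv x := by simp [Fin.init_snoc]
  right_inv t := by simp [Fin.snoc_init_self]

lemma exists_perm (p q : Fin 3) (h : q ≠ p) :
    ∃ σ : Equiv.Perm (Fin 3), σ 0 = q ∧ σ 1 = p := by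
  revert h; revert p q; decide


/-- Lemma 1 of the paper: `E_{r→a}(n) = E_{r→a}(n−1) + (2/3)·E_{½→a}(n)`. -/
theorem hanoi_lemma1 (n : ℕ) (hn : 2 ≤ n)
    (hbig : (Fin n → Fin 3) → ℝ) (hsmall : (Fin (n - 1) → Fin 3) → ℝ)
    (hbigcorner : ∀ p : Fin 3, hbig (corner n p) = 0)
    (hbigrec : ∀ s, (∀ p : Fin 3, s ≠ corner n p) →
      hbig s = 1 + (1 / ((hanoi n).degree s : ℝ)) * ∑ t ∈ (hanoi n).neighborFinset s, hbig t)
    (hsmallcorner : ∀ p : Fin 3, hsmall (corner (n - 1) p) = 0)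
    (hsmallrec : ∀ s, (∀ p : Fin 3, s ≠ corner (n - 1) p) →
      hsmall s = 1 + (1 / ((hanoi (n - 1)).degree s : ℝ)) *
        ∑ t ∈ (hanoi (n - 1)).neighborFinset s, hsmall t) :
    (1 / (3 : ℝ) ^ n) * ∑ s : Fin n → Fin 3, hbig s
      = (1 / (3 : ℝ) ^ (n - 1)) * (∑ s : Fin (n - 1) → Fin 3, hsmall s)
        + (2 / 3 : ℝ) * hbig (halfState n) := by
  obtain ⟨m, rfl⟩ : ∃ m, n = m + 1 := ⟨n - 1, (Nat.succ_pred_eq_of_pos (by omega)).symm⟩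
  simp only [Nat.add_sub_cancel] at hsmallcorner hsmallrec ⊢
  set v : ℝ := hbig (halfState (m+1)) with hv
  -- symmetry: the value at any "ready to move big disk" state is v
  have sym : ∀ p q : Fin 3, q ≠ p → hbig (Fin.snoc (corner m q) p) = v := by
    intro p q hqp
    obtain ⟨σ, hσ0, hσ1⟩ := exists_perm p q hqp
    have : (⇑σ ∘ halfState (m+1)) = Fin.snoc (corner m q) p := by
      funext k
      induction k using Fin.lastCases with
      | last => simp [halfState, hσ1]
      | cast j => simp [halfState, corner, j.isLt, hσ0]
    rw [hv, ← comp_perm_invariant hbig hbigcorner hbigrec σ (halfState (m+1)), this]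
  -- the averaged function equals hsmall
  have key : (fun s' : Fin m → Fin 3 => ((∑ p : Fin 3, hbig (Fin.snoc s' p)) - 2*v)/3)
      = hsmall := by
    apply hanoi_unique
    · intro c
      show ((∑ p : Fin 3, hbig (Fin.snoc (corner m c) p)) - 2*v)/3 = 0
      have hterm : ∀ p : Fin 3, hbig (Fin.snoc (corner m c) p) = if p = c then 0 else v := by
        intro p
        by_cases hpc : p = c
        · rw [hpc, snoc_const, hbigcorner]; simp
        · rw [sym p c (Ne.symm hpc)]; simp [hpc]
      rw [Finset.sum_congr rfl (fun p _ => hterm p), Fin.sum_univ_three]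
      fin_cases c <;> simp [Fin.ext_iff] <;> ring
    · intro s' hs'
      show ((∑ p : Fin 3, hbig (Fin.snoc s' p)) - 2*v)/3
          = 1 + _ * ∑ t' ∈ _, ((∑ p : Fin 3, hbig (Fin.snoc t' p)) - 2*v)/3
      have hd : (0:ℝ) < ((hanoi m).degree s' : ℝ) := by exact_mod_cast degree_pos s' hs'
      set D : ℝ := ((hanoi m).degree s' : ℝ) with hD
      have hterm : ∀ p : Fin 3, hbig (Fin.snoc s' p)
          = 1 + (1/D) * ∑ t' ∈ (hanoi m).neighborFinset s', hbig (Fin.snoc t' p) := by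
        intro p
        rw [hbigrec _ (snoc_noncorner s' p hs'), degree_snoc s' p hs',
          neighborFinset_snoc s' p hs', sum_image (fun a _ b _ h => snoc_inj p h)]
      have hg : (∑ p : Fin 3, hbig (Fin.snoc s' p))
          = 3 + (1/D) * ∑ t' ∈ (hanoi m).neighborFinset s',
              (∑ p : Fin 3, hbig (Fin.snoc t' p)) := by
        rw [Finset.sum_congr rfl (fun p _ => hterm p), sum_add_distrib, ← mul_sum,
          Finset.sum_comm]
        norm_num
      have hS : ∑ t' ∈ (hanoi m).neighborFinset s',
            ((∑ p : Fin 3, hbig (Fin.snoc t' p)) - 2*v)/3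
          = ((∑ t' ∈ (hanoi m).neighborFinset s',
              (∑ p : Fin 3, hbig (Fin.snoc t' p))) - D*(2*v))/3 := by
        rw [← sum_div, sum_sub_distrib, sum_const, SimpleGraph.card_neighborFinset_eq_degree,
          nsmul_eq_mul, hD]
      rw [hg, hS]
      field_simp
      ring
    · exact hsmallcorner
    · exact hsmallrec
  -- sum over all states
  have hsum : ∑ s : Fin (m+1) → Fin 3, hbig s
      = ∑ s' : Fin m → Fin 3, ∑ p : Fin 3, hbig (Fin.snoc s' p) := by
    rw [← Fintype.sum_equiv (snocEquiv m) (fun x => hbig (Fin.snoc x.1 x.2)) hbig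
      (fun x => rfl), Fintype.sum_prod_type]
  have hcard : (Fintype.card (Fin m → Fin 3) : ℝ) = 3^m := by
    rw [Fintype.card_fun]; push_cast; norm_num
  have hsmallsum : ∑ s' : Fin m → Fin 3, hsmall s'
      = ((∑ s' : Fin m → Fin 3, ∑ p : Fin 3, hbig (Fin.snoc s' p)) - 3^m * (2*v))/3 := by
    rw [← key]
    show (∑ s' : Fin m → Fin 3, ((∑ p : Fin 3, hbig (Fin.snoc s' p)) - 2*v)/3) = _
    rw [← sum_div, sum_sub_distrib, sum_const, Finset.card_univ, nsmul_eq_mul, hcard]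
  rw [hsum, show (∑ s : Fin (m+1-1) → Fin 3, hsmall s) = ∑ s' : Fin m → Fin 3, hsmall s' from rfl,
    hsmallsum]
  have h3 : (3:ℝ)^m ≠ 0 := by positivity
  field_simp
  ring
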